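/- arXiv:2412.13357 — 5 statements merged into one kernel-verified Lean document; each statement's English description precedes it below -/
import Mathlib

section
/- Let a, b : C → ℕ be functions on a finite set C of cells with ∑_{c∈C} a(c) = ∑_{c∈C} b(c), and suppose a(c) ≤ M and b(c) ≤ M for all c ∈ C. Then there exists an ordering c_1, …, c_n of C (n = |C|) such that for every prefix length j, |∑_{i≤j} a(c_i) − ∑_{i≤j} b(c_i)| ≤ M. -/
theorem aux0 {α : Type*} [DecidableEq α] (a b : α → ℕ) (M : ℕ) :
    ∀ n (C : Finset α), C.card = n → (∀ c ∈ C, a c ≤ M) → (∀ c ∈ C, b c ≤ M) →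
    ∀ D : ℤ, |D| ≤ (M : ℤ) →
      D = (∑ c ∈ C, (b c : ℤ)) - ∑ c ∈ C, (a c : ℤ) →
    ∃ l : List α, l.Nodup ∧ l.toFinset = C ∧ ∀ j ≤ l.length,
      |D + (((l.take j).map fun c => (a c : ℤ)).sum
          - ((l.take j).map fun c => (b c : ℤ)).sum)| ≤ (M : ℤ) := by
  intro n
  induction n with
  | zero =>
    intro C hcard _ _ D hD _
    refine ⟨[], by simp, by simp [Finset.card_eq_zero.mp hcard], ?_⟩
    intro j hj
    simp only [List.length_nil, Nat.le_zero] at hj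
    subst hj
    simpa using hD
  | succ n ih =>
    intro C hcard ha hb D hD hDsum
    have hne : C.Nonempty := Finset.card_pos.mp (by omega)
    have hDle : D ≤ M := (abs_le.mp hD).2
    have hDge : -(M : ℤ) ≤ D := (abs_le.mp hD).1
    obtain ⟨c, hc, hkey⟩ : ∃ c ∈ C, |D + ((a c : ℤ) - (b c : ℤ))| ≤ (M : ℤ) := by
      rcases le_or_gt 0 D with h0 | h0
      · by_cases hx : ∃ c ∈ C, a c ≤ b c
        · obtain ⟨c, hc, hab⟩ := hx
          refine ⟨c, hc, ?_⟩
          have h1 : (a c : ℤ) ≤ (b c : ℤ) := by exact_mod_cast hab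
          have h2 : (b c : ℤ) ≤ M := by exact_mod_cast hb c hc
          have h3 : (0 : ℤ) ≤ a c := by positivity
          rw [abs_le]; constructor <;> omega
        · exfalso
          push_neg at hx
          have hlt : ∑ c ∈ C, b c < ∑ c ∈ C, a c :=
            Finset.sum_lt_sum_of_nonempty hne hx
          have : (∑ c ∈ C, (b c : ℤ)) < ∑ c ∈ C, (a c : ℤ) := by exact_mod_cast hlt
          omega
      · by_cases hx : ∃ c ∈ C, b c ≤ a c
        · obtain ⟨c, hc, hab⟩ := hx
          refine ⟨c, hc, ?_⟩
          have h1 : (b c : ℤ) ≤ (a c : ℤ) := by exact_mod_cast hab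
          have h2 : (a c : ℤ) ≤ M := by exact_mod_cast ha c hc
          have h3 : (0 : ℤ) ≤ b c := by positivity
          rw [abs_le]; constructor <;> omega
        · exfalso
          push_neg at hx
          have hlt : ∑ c ∈ C, a c < ∑ c ∈ C, b c :=
            Finset.sum_lt_sum_of_nonempty hne hx
          have : (∑ c ∈ C, (a c : ℤ)) < ∑ c ∈ C, (b c : ℤ) := by exact_mod_cast hlt
          omega
    set D' : ℤ := D + ((a c : ℤ) - (b c : ℤ)) with hD'def
    have hsum' : D' = (∑ x ∈ C.erase c, (b x : ℤ)) - ∑ x ∈ C.erase c, (a x : ℤ) := by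
      rw [Finset.sum_erase_eq_sub hc, Finset.sum_erase_eq_sub hc]
      omega
    obtain ⟨l, hnd, htf, hpre⟩ := ih (C.erase c)
      (by rw [Finset.card_erase_of_mem hc, hcard]; rfl)
      (fun x hx => ha x (Finset.mem_of_mem_erase hx))
      (fun x hx => hb x (Finset.mem_of_mem_erase hx))
      D' hkey hsum'
    have hcl : c ∉ l := by
      intro h
      exact Finset.notMem_erase c C (htf ▸ List.mem_toFinset.mpr h)
    refine ⟨c :: l, List.nodup_cons.mpr ⟨hcl, hnd⟩, ?_, ?_⟩
    · simp [htf, Finset.insert_erase hc]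
    · intro j hj
      cases j with
      | zero => simpa using hD
      | succ k =>
        simp only [List.length_cons, Nat.succ_le_succ_iff] at hj
        have h2 := hpre k hj
        simp only [List.take_succ_cons, List.map_cons, List.sum_cons]
        have heq : D + ((a c : ℤ) + ((l.take k).map fun x => (a x : ℤ)).sum
            - ((b c : ℤ) + ((l.take k).map fun x => (b x : ℤ)).sum))
            = D' + (((l.take k).map fun x => (a x : ℤ)).sum
              - ((l.take k).map fun x => (b x : ℤ)).sum) := by
          rw [hD'def]; ring
        rw [heq]
        exact h2

/-- Prefix-balanced ordering of cells: if `a` and `b` have equal totals over a finite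
set `C` and are pointwise bounded by `M`, there is an enumeration of `C` all of whose
prefix sums of `a` and `b` differ by at most `M`. -/
theorem stmt0 {α : Type*} [DecidableEq α] (C : Finset α) (a b : α → ℕ) (M : ℕ)
    (hsum : ∑ c ∈ C, a c = ∑ c ∈ C, b c)
    (ha : ∀ c ∈ C, a c ≤ M) (hb : ∀ c ∈ C, b c ≤ M) :
    ∃ l : List α, l.Nodup ∧ l.toFinset = C ∧
      ∀ j ≤ l.length,
        |((l.take j).map fun c => (a c : ℤ)).sum - ((l.take j).map fun c => (b c : ℤ)).sum|
          ≤ (M : ℤ) := by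
  obtain ⟨l, h1, h2, h3⟩ := aux0 a b M C.card C rfl ha hb 0 (by simp)
    (by have : (∑ c ∈ C, (a c : ℤ)) = ∑ c ∈ C, (b c : ℤ) := by exact_mod_cast hsum
        omega)
  exact ⟨l, h1, h2, fun j hj => by simpa using h3 j hj⟩
end

section
/- Let a : ℕ → ℕ be a sequence indexed by 1..n with a(i) ≤ M for all i, and suppose ∑_{i=1}^n a(i) ≥ K where K ≥ 1. Then the index set {1,…,n} can be partitioned into consecutive intervals (blocks) I_1, …, I_r such that for each block I, K ≤ ∑_{i∈I} a(i) ≤ M + 2K. -/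
/-- Auxiliary greedy lemma, generalized over the start point `s`, by induction on `n - s`. -/
theorem stmt1_aux (M K : ℕ) (a : ℕ → ℕ) (hK : 1 ≤ K) :
    ∀ d s n, n - s ≤ d → (∀ i, 1 ≤ i → i ≤ n → a i ≤ M) →
    K ≤ ∑ i ∈ Finset.Ioc s n, a i →
    ∃ (r : ℕ) (f : ℕ → ℕ), f 0 = s ∧ f r = n ∧ (∀ j < r, f j < f (j + 1)) ∧
      ∀ j < r, K ≤ ∑ i ∈ Finset.Ioc (f j) (f (j + 1)), a i ∧
        ∑ i ∈ Finset.Ioc (f j) (f (j + 1)), a i ≤ M + 2 * K := by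
  intro d
  induction d with
  | zero =>
    intro s n hd hM hsum
    -- n ≤ s, so the sum is 0 < K : contradiction
    have hns : n ≤ s := Nat.le_of_sub_eq_zero (Nat.le_zero.mp hd)
    rw [Finset.Ioc_eq_empty (by omega), Finset.sum_empty] at hsum
    omega
  | succ d ih =>
    intro s n hd hM hsum
    have hsn : s < n := by
      by_contra h
      rw [Finset.Ioc_eq_empty (by omega), Finset.sum_empty] at hsum
      omega
    by_cases hbig : ∑ i ∈ Finset.Ioc s n, a i ≤ M + 2 * K
    · -- one block
      refine ⟨1, fun j => if j = 0 then s else n, rfl, rfl, ?_, ?_⟩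
      · intro j hj
        interval_cases j
        simpa using hsn
      · intro j hj
        interval_cases j
        simpa using ⟨hsum, hbig⟩
    · -- split off the first block greedily
      have hex : ∃ m, K ≤ ∑ i ∈ Finset.Ioc s m, a i := ⟨n, hsum⟩
      set m := Nat.find hex with hm
      have hspec : K ≤ ∑ i ∈ Finset.Ioc s m, a i := Nat.find_spec hex
      have hmn : m ≤ n := Nat.find_min' hex hsum
      have hsm : s < m := by
        by_contra h
        rw [Finset.Ioc_eq_empty (by omega), Finset.sum_empty] at hspec
        omega
      have hmin : ∑ i ∈ Finset.Ioc s (m - 1), a i < K := by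
        have := Nat.find_min hex (show m - 1 < m by omega)
        omega
      have hsplit1 : ∑ i ∈ Finset.Ioc s m, a i
          = ∑ i ∈ Finset.Ioc s (m - 1), a i + a m := by
        have : m = (m - 1) + 1 := by omega
        rw [this, Finset.sum_Ioc_succ_top (by omega), Nat.add_sub_cancel]
      have ham : a m ≤ M := hM m (by omega) hmn
      have hub : ∑ i ∈ Finset.Ioc s m, a i ≤ M + 2 * K := by omega
      have hsplit : ∑ i ∈ Finset.Ioc s m, a i + ∑ i ∈ Finset.Ioc m n, a i
          = ∑ i ∈ Finset.Ioc s n, a i :=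
        Finset.sum_Ioc_consecutive _ (le_of_lt hsm) hmn
      have hrest : K ≤ ∑ i ∈ Finset.Ioc m n, a i := by omega
      obtain ⟨r', f', hf0, hfr, hmono, hblocks⟩ :=
        ih m n (by omega) hM hrest
      refine ⟨r' + 1, fun j => if j = 0 then s else f' (j - 1), rfl, by simp [hfr], ?_, ?_⟩
      · intro j hj
        rcases Nat.eq_zero_or_pos j with h0 | h0
        · subst h0; simpa [hf0] using hsm
        · have hj1 : j - 1 < r' := by omega
          have := hmono (j - 1) hj1
          simp only [if_neg (by omega : ¬ j = 0), if_neg (by omega : ¬ j + 1 = 0)]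
          have : f' (j - 1) < f' (j - 1 + 1) := hmono _ hj1
          have heq : j + 1 - 1 = j - 1 + 1 := by omega
          rw [heq]
          exact this
      · intro j hj
        rcases Nat.eq_zero_or_pos j with h0 | h0
        · subst h0
          simpa [hf0] using ⟨hspec, hub⟩
        · have hj1 : j - 1 < r' := by omega
          have := hblocks (j - 1) hj1
          simp only [if_neg (by omega : ¬ j = 0), if_neg (by omega : ¬ j + 1 = 0)]
          have heq : j + 1 - 1 = j - 1 + 1 := by omega
          rw [heq]
          exact this

/-- Greedy block creation: a sequence `a 1, …, a n` of naturals bounded by `M` with total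
sum at least `K ≥ 1` can be partitioned into consecutive intervals (blocks) whose sums all
lie between `K` and `M + 2K`. -/
theorem stmt1 (n M K : ℕ) (a : ℕ → ℕ) (hK : 1 ≤ K)
    (hM : ∀ i, 1 ≤ i → i ≤ n → a i ≤ M)
    (hsum : K ≤ ∑ i ∈ Finset.Icc 1 n, a i) :
    ∃ (r : ℕ) (f : ℕ → ℕ), f 0 = 0 ∧ f r = n ∧ (∀ j < r, f j < f (j + 1)) ∧
      ∀ j < r, K ≤ ∑ i ∈ Finset.Ioc (f j) (f (j + 1)), a i ∧
        ∑ i ∈ Finset.Ioc (f j) (f (j + 1)), a i ≤ M + 2 * K := by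
  have h01 : Finset.Icc 1 n = Finset.Ioc 0 n := by
    ext x; simp [Nat.lt_iff_add_one_le]
  rw [h01] at hsum
  exact stmt1_aux M K a hK n 0 n (by omega) hM hsum
end

section
/- Let G be a bipartite graph with parts X and R where |R| = m, every vertex in R has degree at least 3, no two vertices of R share a common neighbor (edges from R are uniquely stabbed), and vertices outside R have degree at most 3. For any set P of m vertices partitioned as P = S₁ ∪ S₂ with S₁ = P ∩ R and S₂ = P \ R, the number of edges incident to P satisfies |N(S₁)| + 3|S₂| ≤ |N(R)|, where N denotes the set of incident edges/lines. Consequently the number of lines stabbed by P is at most |N(R)| − |S'| if S' ⊆ S₂ consists of vertices of degree ≤ 2. -/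
/-- Abstract 'error' lemma: `R` consists of `m` points each stabbing at least `3` lines,
no line stabbed by two points of `R`, all other points stab at most `3` lines. For any
`m`-point solution `P` and any `S' ⊆ P \ R` of points stabbing at most `2` lines,
`|N(P ∩ R)| + 3|P \ R| ≤ |N(R)|` and `|N(P)| + |S'| ≤ |N(R)|`. -/
theorem stmt13 {Point Line : Type*} [DecidableEq Point] [DecidableEq Line]
    (m : ℕ) (stab : Point → Finset Line) (R P S' : Finset Point)
    (hR : R.card = m) (hP : P.card = m)
    (hdeg : ∀ r ∈ R, 3 ≤ (stab r).card)
    (hdisj : ∀ r ∈ R, ∀ r' ∈ R, r ≠ r' → Disjoint (stab r) (stab r'))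
    (hout : ∀ p, p ∉ R → (stab p).card ≤ 3)
    (hS' : S' ⊆ P \ R) (hS'deg : ∀ p ∈ S', (stab p).card ≤ 2) :
    ((P ∩ R).biUnion stab).card + 3 * (P \ R).card ≤ (R.biUnion stab).card ∧
    (P.biUnion stab).card + S'.card ≤ (R.biUnion stab).card := by
  -- card of biUnion over R and over P ∩ R as sums
  have hRsum : (R.biUnion stab).card = ∑ r ∈ R, (stab r).card :=
    Finset.card_biUnion hdisj
  have hPRsum : ((P ∩ R).biUnion stab).card = ∑ r ∈ P ∩ R, (stab r).card :=
    Finset.card_biUnion (fun x hx y hy hxy =>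
      hdisj x (Finset.mem_of_mem_inter_right hx) y (Finset.mem_of_mem_inter_right hy) hxy)
  -- split sum over R
  have hsplit : ∑ r ∈ R ∩ P, (stab r).card + ∑ r ∈ R \ P, (stab r).card
      = ∑ r ∈ R, (stab r).card := Finset.sum_inter_add_sum_sdiff R P _
  -- cardinalities
  have hcard1 : (P \ R).card = (R \ P).card := by
    have h1 := Finset.card_inter_add_card_sdiff P R
    have h2 := Finset.card_inter_add_card_sdiff R P
    rw [Finset.inter_comm] at h2
    omega
  have hRP : ∀ r ∈ R \ P, 3 ≤ (stab r).card := fun r hr =>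
    hdeg r (Finset.mem_sdiff.mp hr).1
  have hlow : 3 * (R \ P).card ≤ ∑ r ∈ R \ P, (stab r).card := by
    calc 3 * (R \ P).card = ∑ _r ∈ R \ P, 3 := by
          simp [Finset.sum_const, mul_comm]
      _ ≤ ∑ r ∈ R \ P, (stab r).card := Finset.sum_le_sum hRP
  have first : ((P ∩ R).biUnion stab).card + 3 * (P \ R).card ≤ (R.biUnion stab).card := by
    rw [hRsum, hPRsum, hcard1, ← hsplit, Finset.inter_comm]
    omega
  refine ⟨first, ?_⟩
  -- second inequality
  have hPun : P.biUnion stab = ((P ∩ R).biUnion stab) ∪ ((P \ R).biUnion stab) := by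
    ext l
    simp only [Finset.mem_biUnion, Finset.mem_union, Finset.mem_inter, Finset.mem_sdiff]
    constructor
    · rintro ⟨p, hp, hl⟩
      by_cases h : p ∈ R
      · exact Or.inl ⟨p, ⟨hp, h⟩, hl⟩
      · exact Or.inr ⟨p, ⟨hp, h⟩, hl⟩
    · rintro (⟨p, ⟨hp, _⟩, hl⟩ | ⟨p, ⟨hp, _⟩, hl⟩) <;> exact ⟨p, hp, hl⟩
  have hsub : (P.biUnion stab).card ≤ ((P ∩ R).biUnion stab).card + ((P \ R).biUnion stab).card := by
    rw [hPun]; exact Finset.card_union_le _ _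
  have hPRbound : ((P \ R).biUnion stab).card ≤ ∑ p ∈ P \ R, (stab p).card :=
    Finset.card_biUnion_le
  -- sum over P \ R ≤ 3|P\R| − |S'|
  have hsplit2 : ∑ p ∈ (P \ R) ∩ S', (stab p).card + ∑ p ∈ (P \ R) \ S', (stab p).card
      = ∑ p ∈ P \ R, (stab p).card := Finset.sum_inter_add_sum_sdiff _ _ _
  have hInt : (P \ R) ∩ S' = S' := by
    rw [Finset.inter_eq_right]; exact hS'
  have hsum1 : ∑ p ∈ S', (stab p).card ≤ 2 * S'.card := by
    calc ∑ p ∈ S', (stab p).card ≤ ∑ _p ∈ S', 2 := Finset.sum_le_sum hS'deg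
      _ = 2 * S'.card := by simp [Finset.sum_const, mul_comm]
  have hsum2 : ∑ p ∈ (P \ R) \ S', (stab p).card ≤ 3 * ((P \ R) \ S').card := by
    calc ∑ p ∈ (P \ R) \ S', (stab p).card ≤ ∑ _p ∈ (P \ R) \ S', 3 :=
          Finset.sum_le_sum (fun p hp => hout p
            (Finset.mem_sdiff.mp (Finset.mem_sdiff.mp hp).1).2)
      _ = 3 * ((P \ R) \ S').card := by simp [Finset.sum_const, mul_comm]
  have hScard : ((P \ R) \ S').card = (P \ R).card - S'.card :=
    Finset.card_sdiff_of_subset hS'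
  have hSle : S'.card ≤ (P \ R).card := Finset.card_le_card hS'
  have hPRsum2 : ∑ p ∈ P \ R, (stab p).card + S'.card ≤ 3 * (P \ R).card := by
    rw [← hsplit2, hInt]
    omega
  omega
end

section
/- Let w : B → ℝ≥0 be nonnegative weights on a finite set B with total weight W, and let P(1),…,P(κ) be partitions of B into groups, with extended groups G⁺ ⊇ G such that each element of B lies in G⁺\G for at most r pairs (i, G∈P(i)). If for each i, ∑_{G∈P(i)} w*(G) ≥ (1+δ)W' with δ > r/κ·(W/W'), where w*(G) is a second nonnegative group weight with ∑_{G∈P(i)} w*(G) ≥ (1+δ)W' for all i and ∑_{G∈P(i)} w(G) ≤ W' for all i, then there exist i and G ∈ P(i) with w*(G) > w(G) + ∑_{b∈G⁺\G} w(b). -/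
/-!
Suppose every group satisfied `w*(G) ≤ w(G⁺) = w(G) + w(G⁺ \ G)`. Summing over all groups of all
`κ` partitions, the `w*`-total is at least `κ(1+δ)W'`, while the `w(G)` contribute at most `κW'`
and, by double counting, the overheads `w(G⁺ \ G)` at most `rW`, since each element is counted
in at most `r` of them. As `rW < κδW'`, this is impossible.
-/

open Finset

theorem Finset.sum_sum_eq_sum_card_mul {ι α R : Type*} [Fintype α] [DecidableEq α] [Semiring R]
    (s : Finset ι) (S : ι → Finset α) (w : α → R) :
    ∑ i ∈ s, ∑ a ∈ S i, w a = ∑ a, (#{i ∈ s | a ∈ S i} : R) * w a := by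
  rw [sum_comm' (t' := univ) (s' := fun a ↦ {i ∈ s | a ∈ S i}) (by simp)]
  simp only [sum_const, nsmul_eq_mul]

theorem Finset.sum_sum_sum_le_mul_sum {ι κ α R : Type*} [Fintype α] [DecidableEq α]
    [CommSemiring R] [PartialOrder R] [IsOrderedRing R]
    (s : Finset ι) (P : ι → Finset κ) (S : κ → Finset α) (w : α → R) (hw : ∀ a, 0 ≤ w a) (r : ℕ)
    (hr : ∀ a, ∑ i ∈ s, #{G ∈ P i | a ∈ S G} ≤ r) :
    ∑ i ∈ s, ∑ G ∈ P i, ∑ a ∈ S G, w a ≤ r * ∑ a, w a := by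
  calc ∑ i ∈ s, ∑ G ∈ P i, ∑ a ∈ S G, w a
      = ∑ a, ((∑ i ∈ s, #{G ∈ P i | a ∈ S G} : ℕ) : R) * w a := by
        simp_rw [sum_sum_eq_sum_card_mul, Nat.cast_sum, sum_mul]
        exact sum_comm
    _ ≤ ∑ a, (r : R) * w a := sum_le_sum fun a _ ↦
        mul_le_mul_of_nonneg_right (Nat.mono_cast (hr a)) (hw a)
    _ = r * ∑ a, w a := (mul_sum ..).symm

/-- Double-counting/averaging lemma: `κ` partitions into groups with extensions, each
element lying in `G⁺ \ G` for at most `r` pairs `(i, G)`; if every partition has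
`∑ w*(G) ≥ (1+δ)W'` and `∑ w(G) ≤ W'` with `δ > rW/(κW')`, then some group satisfies
`w*(G) > w(G⁺)`. -/
theorem stmt16 {B : Type*} [Fintype B] [DecidableEq B]
    (κ r : ℕ) (hκ : 0 < κ)
    (P : Fin κ → Finset (Finset B)) (ext : Finset B → Finset B)
    (hext : ∀ G, G ⊆ ext G)
    (w : B → ℝ) (hw : ∀ b, 0 ≤ w b)
    (wstar : Finset B → ℝ)
    (W' δ : ℝ) (hW' : 0 < W')
    (hδ : (r : ℝ) * (∑ b, w b) / (κ * W') < δ)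
    (hr : ∀ b : B, (∑ i : Fin κ, ((P i).filter fun G => b ∈ ext G ∧ b ∉ G).card) ≤ r)
    (hstar : ∀ i, (1 + δ) * W' ≤ ∑ G ∈ P i, wstar G)
    (hwg : ∀ i, (∑ G ∈ P i, ∑ b ∈ G, w b) ≤ W') :
    ∃ i, ∃ G ∈ P i, (∑ b ∈ ext G, w b) < wstar G := by
  have hoverhead : ∑ i, ∑ G ∈ P i, ∑ b ∈ ext G \ G, w b ≤ r * ∑ b, w b :=
    sum_sum_sum_le_mul_sum _ P (fun G ↦ ext G \ G) w hw r (by simpa only [mem_sdiff] using hr)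
  have hw_total : ∑ i, ∑ G ∈ P i, ∑ b ∈ ext G, w b ≤ κ * W' + r * ∑ b, w b := by
    simp_rw [← sum_sdiff (hext _), sum_add_distrib]
    have := sum_le_sum fun i (_ : i ∈ univ) ↦ hwg i
    simp only [sum_const, card_univ, Fintype.card_fin, nsmul_eq_mul] at this
    linarith
  have hstar_total : κ * ((1 + δ) * W') ≤ ∑ i, ∑ G ∈ P i, wstar G := by
    simpa using sum_le_sum fun i (_ : i ∈ univ) ↦ hstar i
  have hgap : r * ∑ b, w b < δ * (κ * W') := by
    rwa [div_lt_iff₀ (by positivity)] at hδ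
  obtain ⟨i, -, hi⟩ := exists_lt_of_sum_lt (by linarith : ∑ i, ∑ G ∈ P i, ∑ b ∈ ext G, w b <
    ∑ i, ∑ G ∈ P i, wstar G)
  obtain ⟨G, hG, hlt⟩ := exists_lt_of_sum_lt hi
  exact ⟨i, G, hG, hlt⟩
end

section
/- If OPT(t) ≥ 2·ALG(t−1) + 1, where ALG(t−1) is the size of the point set covered by m disks of the algorithm and OPT(t) the size covered by m optimal disks (each point assigned to a unique covering disk), then there exist a disk D_old in the algorithm's solution and a disk D_new in the optimal solution such that the number of points assigned to D_old is at most ALG(t−1)/m while D_new covers at least (ALG(t−1)+1)/m points not covered by the algorithm's solution; hence swapping D_old for D_new strictly increases the number of covered points. -/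
/-- If `OPT ≥ 2·ALG + 1`, where the algorithm's `m` disks partition the `ALG` covered
points and the optimal `m` disks cover the `OPT` points, then there is an algorithm disk
covering at most `ALG/m` points and an optimal disk covering at least `(ALG+1)/m` points
not covered by the algorithm; swapping them strictly increases the number of covered
points. -/
theorem stmt18 {Point : Type*} [DecidableEq Point]
    (m : ℕ) (hm : 0 < m)
    (algD optD : Fin m → Finset Point) (Palg Popt : Finset Point)
    (halg : Palg = Finset.univ.biUnion algD)
    (halgsum : ∑ i : Fin m, (algD i).card = Palg.card)
    (hopt : Popt = Finset.univ.biUnion optD)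
    (h : 2 * Palg.card + 1 ≤ Popt.card) :
    ∃ i j : Fin m,
      (algD i).card * m ≤ Palg.card ∧
      Palg.card + 1 ≤ (optD j \ Palg).card * m ∧
      (algD i).card < (optD j \ Palg).card := by
  -- There is an algorithm disk with at most the average number of points.
  have h1 : ∃ i : Fin m, (algD i).card * m ≤ Palg.card := by
    by_contra hc
    push_neg at hc
    have hs : m * (Palg.card + 1) ≤ ∑ i : Fin m, (algD i).card * m := by
      calc m * (Palg.card + 1) = ∑ _i : Fin m, (Palg.card + 1) := by
            simp [Finset.sum_const, Nat.mul_comm]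
        _ ≤ ∑ i : Fin m, (algD i).card * m :=
            Finset.sum_le_sum fun i _ => hc i
    rw [← Finset.sum_mul, halgsum] at hs
    nlinarith
  -- Popt ⊆ (Popt \ Palg) ∪ Palg, so (Popt \ Palg).card ≥ Palg.card + 1.
  have hsub : Popt ⊆ (Popt \ Palg) ∪ Palg := by
    intro x hx
    by_cases hxp : x ∈ Palg
    · exact Finset.mem_union_right _ hxp
    · exact Finset.mem_union_left _ (Finset.mem_sdiff.mpr ⟨hx, hxp⟩)
  have hcard : Palg.card + 1 ≤ (Popt \ Palg).card := by
    have := Finset.card_le_card hsub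
    have := Finset.card_union_le (Popt \ Palg) Palg
    omega
  -- (Popt \ Palg).card ≤ ∑ j, (optD j \ Palg).card
  have hbU : Popt \ Palg ⊆ Finset.univ.biUnion (fun j => optD j \ Palg) := by
    intro x hx
    rw [Finset.mem_sdiff, hopt, Finset.mem_biUnion] at hx
    obtain ⟨⟨j, hj, hxj⟩, hxp⟩ := hx
    exact Finset.mem_biUnion.mpr ⟨j, hj, Finset.mem_sdiff.mpr ⟨hxj, hxp⟩⟩
  have hsumopt : (Popt \ Palg).card ≤ ∑ j : Fin m, (optD j \ Palg).card :=
    le_trans (Finset.card_le_card hbU) (Finset.card_biUnion_le)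
  have h2 : ∃ j : Fin m, Palg.card + 1 ≤ (optD j \ Palg).card * m := by
    by_contra hc
    push_neg at hc
    have hs : (∑ j : Fin m, (optD j \ Palg).card) * m ≤ m * Palg.card := by
      rw [Finset.sum_mul]
      calc ∑ j : Fin m, (optD j \ Palg).card * m
          ≤ ∑ _j : Fin m, Palg.card :=
            Finset.sum_le_sum fun j _ => Nat.lt_succ_iff.mp (hc j)
        _ = m * Palg.card := by simp [Finset.sum_const, Nat.mul_comm]
    have : Palg.card + 1 ≤ ∑ j : Fin m, (optD j \ Palg).card := le_trans hcard hsumopt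
    nlinarith
  obtain ⟨i, hi⟩ := h1
  obtain ⟨j, hj⟩ := h2
  refine ⟨i, j, hi, hj, ?_⟩
  have : (algD i).card * m < (optD j \ Palg).card * m := by omega
  exact Nat.lt_of_mul_lt_mul_right this
end
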